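/- arXiv:2309.00214 — 7 statements merged into one kernel-verified Lean document; each statement's English description precedes it below -/
import Mathlib

section
/- For all parameters u̲, v̲ ∈ [0,1], the value max_{v ∈ [v̲,1]} min{1 − v, (1 − u̲)·v} equals min{(1 − u̲)/(2 − u̲), 1 − v̲}. -/
/-- For all u̲, v̲ ∈ [0,1],
max_{v ∈ [v̲,1]} min{1 − v, (1 − u̲)·v} = min{(1 − u̲)/(2 − u̲), 1 − v̲}. -/
theorem stmt0 (ul vl : ℝ) (hul : ul ∈ Set.Icc (0:ℝ) 1) (hvl : vl ∈ Set.Icc (0:ℝ) 1) :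
    IsGreatest {x : ℝ | ∃ v ∈ Set.Icc vl 1, x = min (1 - v) ((1 - ul) * v)}
      (min ((1 - ul) / (2 - ul)) (1 - vl)) := by
  obtain ⟨hu0, hu1⟩ := hul
  obtain ⟨hv0, hv1⟩ := hvl
  have hpos : (0:ℝ) < 2 - ul := by linarith
  set c : ℝ := 1 / (2 - ul) with hc
  have hc1 : c ≤ 1 := by
    rw [hc, div_le_one hpos]; linarith
  have hc0 : 0 < c := by positivity
  have hkey : (1 - ul) / (2 - ul) = 1 - c := by
    rw [hc]; field_simp; ring
  have h1c : (1 - ul) * c = 1 - c := by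
    rw [hc]; field_simp; ring
  constructor
  · rcases le_total vl c with h | h
    · refine ⟨c, ⟨h, hc1⟩, ?_⟩
      rw [h1c, min_self, hkey, min_eq_left (by linarith)]
    · refine ⟨vl, ⟨le_refl _, hv1⟩, ?_⟩
      have h1 : 1 - vl ≤ 1 - c := by linarith
      have h2 : 1 - vl ≤ (1 - ul) * vl := by
        have : 1 ≤ (2 - ul) * vl := by
          rw [hc] at h
          calc 1 = (2 - ul) * (1 / (2 - ul)) := by field_simp
          _ ≤ (2 - ul) * vl := by nlinarith
        nlinarith
      rw [min_eq_left h2, hkey, min_eq_right h1]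
  · rintro x ⟨v, ⟨hvl', hv1'⟩, rfl⟩
    apply le_min
    · rw [hkey]
      rcases le_total v c with h | h
      · refine le_trans (min_le_right _ _) ?_
        nlinarith [mul_le_mul_of_nonneg_left h (by linarith : (0:ℝ) ≤ 1 - ul)]
      · exact le_trans (min_le_left _ _) (by linarith)
    · exact le_trans (min_le_left _ _) (by linarith)
end

section
/- Let u̲ = 0 and define γ(u,p) = min{q ∈ [0,1] : q·u ≥ p·u} for u ∈ [0,1], p ∈ [0,1]. Then max_{(u,v) ∈ [0,1]²} min_{p ∈ [0,1]} max{(1 − p)·v, γ(u,p)·(1 − v)} = 1/4. -/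
/-- γ(u,p) with u̲ = 0: min{q ∈ [0,1] : q·u ≥ p·u}. -/
noncomputable def gammaFn0 (u p : ℝ) : ℝ :=
  sInf {q : ℝ | q ∈ Set.Icc (0:ℝ) 1 ∧ p * u ≤ q * u}

lemma gammaFn0_pos {u p : ℝ} (hu : 0 < u) (hp0 : 0 ≤ p) (hp1 : p ≤ 1) :
    gammaFn0 u p = p := by
  have hset : {q : ℝ | q ∈ Set.Icc (0:ℝ) 1 ∧ p * u ≤ q * u} = Set.Icc p 1 := by
    ext q
    simp only [Set.mem_setOf_eq, Set.mem_Icc]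
    constructor
    · rintro ⟨⟨hq0, hq1⟩, hle⟩
      exact ⟨le_of_mul_le_mul_right hle hu, hq1⟩
    · rintro ⟨hpq, hq1⟩
      exact ⟨⟨le_trans hp0 hpq, hq1⟩, mul_le_mul_of_nonneg_right hpq hu.le⟩
  rw [gammaFn0, hset, csInf_Icc hp1]

lemma gammaFn0_zero (p : ℝ) : gammaFn0 0 p = 0 := by
  have hset : {q : ℝ | q ∈ Set.Icc (0:ℝ) 1 ∧ p * 0 ≤ q * 0} = Set.Icc (0:ℝ) 1 := by
    ext q; simp
  rw [gammaFn0, hset, csInf_Icc (by norm_num : (0:ℝ) ≤ 1)]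

/-- with u̲ = v̲ = 0,
max_{(u,v)∈[0,1]²} min_{p∈[0,1]} max{(1−p)v, γ(u,p)(1−v)} = 1/4. -/
theorem stmt3 :
    IsGreatest {x : ℝ | ∃ u ∈ Set.Icc (0:ℝ) 1, ∃ v ∈ Set.Icc (0:ℝ) 1,
        x = sInf {y : ℝ | ∃ p ∈ Set.Icc (0:ℝ) 1,
          y = max ((1 - p) * v) (gammaFn0 u p * (1 - v))}}
      (1 / 4) := by
  constructor
  · -- membership: u = 1, v = 1/2
    refine ⟨1, by norm_num, 1/2, by norm_num, ?_⟩
    have h : IsLeast {y : ℝ | ∃ p ∈ Set.Icc (0:ℝ) 1,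
        y = max ((1 - p) * (1/2)) (gammaFn0 1 p * (1 - 1/2))} (1/4) := by
      constructor
      · refine ⟨1/2, by norm_num, ?_⟩
        rw [gammaFn0_pos one_pos (by norm_num) (by norm_num)]
        norm_num
      · rintro y ⟨p, ⟨hp0, hp1⟩, rfl⟩
        rw [gammaFn0_pos one_pos hp0 hp1]
        rcases le_total p (1/2) with h | h
        · exact le_trans (by nlinarith) (le_max_left _ _)
        · exact le_trans (by nlinarith) (le_max_right _ _)
    exact (h.csInf_eq).symm
  · -- upper bound
    rintro x ⟨u, ⟨hu0, hu1⟩, v, ⟨hv0, hv1⟩, rfl⟩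
    have hbdd : BddBelow {y : ℝ | ∃ p ∈ Set.Icc (0:ℝ) 1,
        y = max ((1 - p) * v) (gammaFn0 u p * (1 - v))} := by
      refine ⟨0, ?_⟩
      rintro y ⟨p, ⟨hp0, hp1⟩, rfl⟩
      exact le_trans (by nlinarith) (le_max_left _ _)
    have hmem : max ((1 - v) * v) (gammaFn0 u v * (1 - v)) ∈
        {y : ℝ | ∃ p ∈ Set.Icc (0:ℝ) 1,
          y = max ((1 - p) * v) (gammaFn0 u p * (1 - v))} :=
      ⟨v, ⟨hv0, hv1⟩, rfl⟩
    refine le_trans (csInf_le hbdd hmem) ?_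
    rcases eq_or_lt_of_le hu0 with h | h
    · rw [← h, gammaFn0_zero]
      apply max_le <;> nlinarith [sq_nonneg (v - 1/2)]
    · rw [gammaFn0_pos h hv0 hv1]
      apply max_le <;> nlinarith [sq_nonneg (v - 1/2)]
end

section
/- Fix u̲ ∈ [0,1), v̲ ∈ [0,1], set R^s = min{(1 − u̲)/(2 − u̲), 1 − v̲}, and let α : [u̲,1] × [v̲,1] → [0,1] be any function. Then sup_{v ∈ [v̲,1]} max{1 − α(1,v)·v, v − α(1,v)·v · 1[α(1,v) ≤ u̲]} ≥ R^s; more precisely: for every v ∈ [v̲,1], either α(1,v) > u̲, in which case 1 − α(1,v)·v ≥ 1 − v, or α(1,v) ≤ u̲, in which case (1 − α(1,v))·v ≥ (1 − u̲)·v; hence sup_{v ∈ [v̲,1]} min{1 − v, (1 − u̲)·v} = R^s is a lower bound on the worst case over these two regret expressions. -/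
/-- lower bound R^s on worst-case regret in the single-project environment. -/
theorem stmt4 (ul vl : ℝ) (hul : ul ∈ Set.Ico (0:ℝ) 1) (hvl : vl ∈ Set.Icc (0:ℝ) 1)
    (α : ℝ → ℝ → ℝ)
    (hα : ∀ u v, u ∈ Set.Icc ul 1 → v ∈ Set.Icc vl 1 → α u v ∈ Set.Icc (0:ℝ) 1) :
    (∀ v ∈ Set.Icc vl 1,
      (ul < α 1 v → 1 - v ≤ 1 - α 1 v * v) ∧
      (α 1 v ≤ ul → (1 - ul) * v ≤ (1 - α 1 v) * v)) ∧
    IsGreatest {x : ℝ | ∃ v ∈ Set.Icc vl 1, x = min (1 - v) ((1 - ul) * v)}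
      (min ((1 - ul) / (2 - ul)) (1 - vl)) := by
  obtain ⟨hul0, hul1⟩ := hul
  obtain ⟨hvl0, hvl1⟩ := hvl
  have h2 : (0:ℝ) < 2 - ul := by linarith
  constructor
  · intro v hv
    have hv0 : 0 ≤ v := le_trans hvl0 hv.1
    have hα1 := hα 1 v ⟨le_of_lt hul1, le_refl 1⟩ hv
    constructor
    · intro _
      nlinarith [hα1.2]
    · intro hle
      nlinarith
  · constructor
    · by_cases hcase : vl ≤ 1 / (2 - ul)
      · refine ⟨1 / (2 - ul), ⟨hcase, ?_⟩, ?_⟩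
        · rw [div_le_one h2]; linarith
        · have e1 : 1 - 1 / (2 - ul) = (1 - ul) / (2 - ul) := by
            field_simp; ring
          have e2 : (1 - ul) * (1 / (2 - ul)) = (1 - ul) / (2 - ul) := by
            field_simp
          rw [e1, e2, min_self]
          have : (1 - ul) / (2 - ul) ≤ 1 - vl := by
            rw [div_le_iff₀ h2]; nlinarith
          rw [min_eq_left this]
      · push_neg at hcase
        refine ⟨vl, ⟨le_refl vl, hvl1⟩, ?_⟩
        have hvl' : 1 / (2 - ul) < vl := hcase
        have h1 : 1 - vl ≤ (1 - ul) * vl := by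
          have := (div_lt_iff₀ h2).mp hvl'
          nlinarith
        have h2' : 1 - vl ≤ (1 - ul) / (2 - ul) := by
          rw [le_div_iff₀ h2]
          have := (div_lt_iff₀ h2).mp hvl'
          nlinarith
        rw [min_eq_left h1, min_eq_right h2']
    · rintro x ⟨v, ⟨hv1, hv2⟩, rfl⟩
      apply le_min
      · by_cases hc : v ≤ 1 / (2 - ul)
        · refine le_trans (min_le_right _ _) ?_
          have hc' : v * (2 - ul) ≤ 1 := (le_div_iff₀ h2).mp hc
          rw [le_div_iff₀ h2]
          nlinarith [mul_le_mul_of_nonneg_left hc' (by linarith : (0:ℝ) ≤ 1 - ul)]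
        · push_neg at hc
          refine le_trans (min_le_left _ _) ?_
          rw [le_div_iff₀ h2]
          have := (div_lt_iff₀ h2).mp hc
          nlinarith
      · exact le_trans (min_le_left _ _) (by linarith)
end

section
/- Fix u̲ ∈ [0,1], v̲ ∈ [0,1], R^s = min{(1 − u̲)/(2 − u̲), 1 − v̲}, D = [u̲,1] × [v̲,1], and the mechanism α^s(u,v) = 1 if v ≥ 1 − R^s or u = 0, else u̲/u. Let A ⊆ D be a finite nonempty set such that v < 1 − R^s for all (u,v) ∈ A, and let (u',v') ∈ A maximize α^s(u,v)·v over A, and let v_p = max{v : (u,v) ∈ A}. Then v_p − α^s(u',v')·v' ≤ R^s. -/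
open Classical in
/-- The optimal single-project mechanism α^s. -/
noncomputable def alphaS (ul Rs u v : ℝ) : ℝ :=
  if 1 - Rs ≤ v ∨ u = 0 then 1 else ul / u

/-- if all available projects are bottom tier and the agent proposes the
project maximizing the principal's expected payoff, the regret is at most R^s. -/
theorem stmt6 (ul vl Rs : ℝ) (hul : ul ∈ Set.Icc (0:ℝ) 1) (hvl : vl ∈ Set.Icc (0:ℝ) 1)
    (hRs : Rs = min ((1 - ul) / (2 - ul)) (1 - vl))
    (A : Finset (ℝ × ℝ)) (hA : A.Nonempty)
    (hD : ∀ a ∈ A, a.1 ∈ Set.Icc ul 1 ∧ a.2 ∈ Set.Icc vl 1 ∧ a.2 < 1 - Rs)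
    (u' v' : ℝ) (hmem : (u', v') ∈ A)
    (hopt : ∀ a ∈ A, alphaS ul Rs a.1 a.2 * a.2 ≤ alphaS ul Rs u' v' * v')
    (up vp : ℝ) (hpmem : (up, vp) ∈ A) (hvp : ∀ a ∈ A, a.2 ≤ vp) :
    vp - alphaS ul Rs u' v' * v' ≤ Rs := by
  obtain ⟨hul0, hul1⟩ := hul
  obtain ⟨hvl0, hvl1⟩ := hvl
  obtain ⟨hu, hv, hbt⟩ := hD _ hpmem
  simp only at hu hv hbt
  have h2 : (0:ℝ) < 2 - ul := by linarith
  have hRs0 : 0 ≤ Rs := by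
    rw [hRs]
    exact le_min (div_nonneg (by linarith) h2.le) (by linarith)
  have hp := hopt _ hpmem
  simp only at hp
  have key : vp - alphaS ul Rs up vp * vp ≤ Rs := by
    by_cases hup : up = 0
    · unfold alphaS
      rw [if_pos (Or.inr hup)]
      linarith
    · unfold alphaS
      rw [if_neg (by push_neg; exact ⟨by linarith, hup⟩)]
      have hRs' : Rs = (1 - ul) / (2 - ul) := by
        rcases min_cases ((1 - ul) / (2 - ul)) (1 - vl) with ⟨h1, _⟩ | ⟨h1, _⟩
        · rw [hRs, h1]
        · exfalso; rw [hRs, h1] at hbt; linarith [hv.1]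
      have hup0 : 0 < up := lt_of_le_of_ne (hul0.trans hu.1) (Ne.symm hup)
      have haux : ul ≤ ul / up := by
        rw [le_div_iff₀ hup0]; nlinarith [hu.2]
      have h1 : (1 - ul) * vp ≤ Rs := by
        have heq : (1 - ul) * (1 - Rs) = Rs := by
          rw [hRs']; field_simp; ring
        nlinarith
      have hvp0 : 0 ≤ vp := hvl0.trans hv.1
      nlinarith
  linarith
end

section
/- Fix u̲ ∈ [0,1], v̲ ∈ [0,1], R^s = min{(1 − u̲)/(2 − u̲), 1 − v̲}, D = [u̲,1] × [v̲,1]. Let α : D → [0,1] be an approval-probability function and suppose (u,v) ∈ D satisfies v < 1 − R^s and u > 0. If α(u,v)·u > u̲, then there exists a type A (namely A = {(u,v),(u̲,1)}) on which the regret of the mechanism α is strictly greater than R^s (because the agent proposes (u,v) and the regret is 1 − α(u,v)·v ≥ 1 − v > R^s). Consequently, any single-project mechanism with worst-case regret at most R^s satisfies α(u,v) ≤ u̲/u for all such (u,v). -/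
open Classical in
/-- any single-project mechanism whose regret on the type
{(u,v),(u̲,1)} is at most R^s must satisfy α(u,v) ≤ u̲/u for bottom-tier (u,v) with u > 0. -/
theorem stmt7 (ul vl Rs : ℝ) (hul : ul ∈ Set.Icc (0:ℝ) 1) (hvl : vl ∈ Set.Icc (0:ℝ) 1)
    (hRs : Rs = min ((1 - ul) / (2 - ul)) (1 - vl))
    (α : ℝ → ℝ → ℝ)
    (hα : ∀ u v, u ∈ Set.Icc ul 1 → v ∈ Set.Icc vl 1 → α u v ∈ Set.Icc (0:ℝ) 1)
    (u v : ℝ) (hu : u ∈ Set.Icc ul 1) (hv : v ∈ Set.Icc vl 1)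
    (hbot : v < 1 - Rs) (hupos : 0 < u) :
    (ul < α u v * u →
      Rs < (if α ul 1 * ul < α u v * u then 1 - α u v * v else 1 - α ul 1 * 1)) ∧
    ((if α ul 1 * ul < α u v * u then 1 - α u v * v else 1 - α ul 1 * 1) ≤ Rs →
      α u v ≤ ul / u) := by
  obtain ⟨hα0, hα1⟩ := hα u v hu hv
  obtain ⟨hαl0, hαl1⟩ := hα ul 1 (Set.mem_Icc.mpr ⟨le_refl _, hul.2⟩)
    (Set.mem_Icc.mpr ⟨hvl.2, le_refl _⟩)
  have hv0 : 0 ≤ v := le_trans hvl.1 hv.1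
  have key : ul < α u v * u → Rs < 1 - α u v * v := by
    intro h
    have : α u v * v ≤ v := by nlinarith
    linarith
  constructor
  · intro h
    have hif : α ul 1 * ul < α u v * u := lt_of_le_of_lt (by nlinarith [hul.1]) h
    rw [if_pos hif]
    exact key h
  · intro h
    by_contra hc
    push_neg at hc
    have h2 : ul < α u v * u := by
      rw [div_lt_iff₀ hupos] at hc; exact hc
    have hif : α ul 1 * ul < α u v * u := lt_of_le_of_lt (by nlinarith [hul.1]) h2
    rw [if_pos hif] at h
    exact absurd h (not_le.mpr (key h2))
end

section
/- Fix u̲ ∈ [0,1], define γ(u,p) = min{q ∈ [0,1] : u̲ + q(u − u̲) ≥ pu}, R^m = max_{(u,v)} min_{p} max{(1−p)v, γ(u,p)(1−v)} over (u,v) ∈ [u̲,1]×[v̲,1], p ∈ [0,1], and α^m(u,v) = max{p ∈ [0,1] : γ(u,p)(1−v) ≤ R^m}. Then for every (u,v) ∈ [u̲,1]×[v̲,1], the regret when (u,v) is the only available project satisfies v·(1 − α^m(u,v)) ≤ R^m. -/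
/-- γ(u,p) = min{q ∈ [0,1] : u̲ + q(u − u̲) ≥ p·u}. -/
noncomputable def gammaFn (ul u p : ℝ) : ℝ :=
  sInf {q : ℝ | q ∈ Set.Icc (0:ℝ) 1 ∧ p * u ≤ ul + q * (u - ul)}

/-- R^m = max_{(u,v)} min_{p∈[0,1]} max{(1−p)v, γ(u,p)(1−v)}. -/
noncomputable def RmVal (ul vl : ℝ) : ℝ :=
  sSup {x : ℝ | ∃ u ∈ Set.Icc ul 1, ∃ v ∈ Set.Icc vl 1,
    x = sInf {y : ℝ | ∃ p ∈ Set.Icc (0:ℝ) 1,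
      y = max ((1 - p) * v) (gammaFn ul u p * (1 - v))}}

/-- α^m(u,v) = max{p ∈ [0,1] : γ(u,p)(1−v) ≤ R^m}. -/
noncomputable def alphaM (ul vl u v : ℝ) : ℝ :=
  sSup {p : ℝ | p ∈ Set.Icc (0:ℝ) 1 ∧ gammaFn ul u p * (1 - v) ≤ RmVal ul vl}

lemma gamma_zero (ul u : ℝ) (hul : 0 ≤ ul) : gammaFn ul u 0 = 0 := by
  have hmem : (0:ℝ) ∈ {q : ℝ | q ∈ Set.Icc (0:ℝ) 1 ∧ 0 * u ≤ ul + q * (u - ul)} := by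
    constructor
    · exact ⟨le_refl 0, zero_le_one⟩
    · simpa using hul
  refine le_antisymm (csInf_le ⟨0, fun q hq => hq.1.1⟩ hmem) ?_
  exact le_csInf ⟨0, hmem⟩ fun q hq => hq.1.1

lemma gamma_eq (ul u p : ℝ) (hlt : ul < u) (hpu : p * u ≤ u) :
    gammaFn ul u p = max 0 ((p * u - ul) / (u - ul)) := by
  have h : (0:ℝ) < u - ul := by linarith
  have hset : {q : ℝ | q ∈ Set.Icc (0:ℝ) 1 ∧ p * u ≤ ul + q * (u - ul)}
      = Set.Icc (max 0 ((p * u - ul) / (u - ul))) 1 := by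
    ext q
    simp only [Set.mem_setOf_eq, Set.mem_Icc, max_le_iff, div_le_iff₀ h]
    constructor
    · rintro ⟨⟨h0, h1⟩, h2⟩; exact ⟨⟨h0, by linarith⟩, h1⟩
    · rintro ⟨⟨h0, h2⟩, h1⟩; exact ⟨⟨h0, h1⟩, by linarith⟩
  have hle : max 0 ((p * u - ul) / (u - ul)) ≤ 1 := by
    refine max_le zero_le_one ?_
    rw [div_le_one h]; linarith
  rw [gammaFn, hset, csInf_Icc hle]

lemma gamma_eq_self (ul p : ℝ) (hul : 0 ≤ ul) (hp : p ≤ 1) : gammaFn ul ul p = 0 := by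
  have hmem : (0:ℝ) ∈ {q : ℝ | q ∈ Set.Icc (0:ℝ) 1 ∧ p * ul ≤ ul + q * (ul - ul)} := by
    constructor
    · exact ⟨le_refl 0, zero_le_one⟩
    · nlinarith
  refine le_antisymm (csInf_le ⟨0, fun q hq => hq.1.1⟩ hmem) ?_
  exact le_csInf ⟨0, hmem⟩ fun q hq => hq.1.1

/-- the singleton-proposal regret satisfies v(1 − α^m(u,v)) ≤ R^m. -/
theorem stmt12 (ul vl : ℝ) (hul : ul ∈ Set.Icc (0:ℝ) 1) (hvl : vl ∈ Set.Icc (0:ℝ) 1)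
    (u v : ℝ) (hu : u ∈ Set.Icc ul 1) (hv : v ∈ Set.Icc vl 1) :
    v * (1 - alphaM ul vl u v) ≤ RmVal ul vl := by
  obtain ⟨hul0, hul1⟩ := hul
  obtain ⟨hvl0, hvl1⟩ := hvl
  obtain ⟨huul, hu1⟩ := hu
  obtain ⟨hvvl, hv1⟩ := hv
  have hv0 : 0 ≤ v := le_trans hvl0 hvvl
  have hv1' : 0 ≤ 1 - v := by linarith
  -- The inner set for a given (u', v')
  set T : ℝ → ℝ → Set ℝ := fun u' v' => {y : ℝ | ∃ p ∈ Set.Icc (0:ℝ) 1,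
      y = max ((1 - p) * v') (gammaFn ul u' p * (1 - v'))} with hT
  -- nonneg lower bound on T when 0 ≤ v'
  have hTlb : ∀ u' v', 0 ≤ v' → ∀ y ∈ T u' v', (0:ℝ) ≤ y := by
    intro u' v' hv' y hy
    obtain ⟨p, ⟨hp0, hp1⟩, rfl⟩ := hy
    have : (0:ℝ) ≤ (1 - p) * v' := mul_nonneg (by linarith) hv'
    exact le_trans this (le_max_left _ _)
  -- v' belongs-like: sInf (T u' v') ≤ v' for v' ∈ [0,1]
  have hTle : ∀ u' v', 0 ≤ v' → v' ≤ 1 → sInf (T u' v') ≤ v' := by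
    intro u' v' hv'0 hv'1
    have hmem : max ((1 - 0) * v') (gammaFn ul u' 0 * (1 - v')) ∈ T u' v' :=
      ⟨0, ⟨le_refl 0, zero_le_one⟩, rfl⟩
    have heq : max ((1 - 0) * v') (gammaFn ul u' 0 * (1 - v')) = v' := by
      rw [gamma_zero ul u' hul0]
      simp [hv'0]
    have := csInf_le ⟨0, hTlb u' v' hv'0⟩ hmem
    rwa [heq] at this
  -- the outer set S
  set S : Set ℝ := {x : ℝ | ∃ u' ∈ Set.Icc ul 1, ∃ v' ∈ Set.Icc vl 1, x = sInf (T u' v')} with hS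
  have hSbdd : BddAbove S := by
    refine ⟨1, ?_⟩
    rintro x ⟨u', hu', v', hv', rfl⟩
    exact le_trans (hTle u' v' (le_trans hvl0 hv'.1) hv'.2) hv'.2
  have hxS : sInf (T u v) ∈ S := ⟨u, ⟨huul, hu1⟩, v, ⟨hvvl, hv1⟩, rfl⟩
  have hRm : RmVal ul vl = sSup S := rfl
  have hxle : sInf (T u v) ≤ RmVal ul vl := le_csSup hSbdd hxS
  have hTne : (T u v).Nonempty := ⟨_, 0, ⟨le_refl 0, zero_le_one⟩, rfl⟩
  have hRm0 : 0 ≤ RmVal ul vl :=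
    le_trans (le_csInf hTne (hTlb u v hv0)) hxle
  -- set defining alpha
  set A : Set ℝ := {p : ℝ | p ∈ Set.Icc (0:ℝ) 1 ∧ gammaFn ul u p * (1 - v) ≤ RmVal ul vl}
    with hA
  have hAbdd : BddAbove A := ⟨1, fun p hp => hp.1.2⟩
  -- find p̄ in [0,1] minimizing f, with f p̄ ≤ RmVal
  rcases eq_or_lt_of_le huul with heq | hlt
  · -- u = ul : gammaFn ul u 1 = 0, so 1 ∈ A, alpha = 1
    have h1A : (1:ℝ) ∈ A := by
      constructor
      · exact ⟨zero_le_one, le_refl 1⟩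
      · rw [← heq, gamma_eq_self ul 1 hul0 le_rfl]
        simpa using hRm0
    have : (1:ℝ) ≤ alphaM ul vl u v := le_csSup hAbdd h1A
    have : v * (1 - alphaM ul vl u v) ≤ 0 := by nlinarith
    linarith
  · -- u > ul : γ(u,p) = max 0 ((pu - ul)/(u - ul)) for p ∈ [0,1]
    have hu0 : 0 ≤ u := le_trans hul0 huul
    set f : ℝ → ℝ := fun p => max ((1 - p) * v)
        (max 0 ((p * u - ul) / (u - ul)) * (1 - v)) with hf
    have hfg : ∀ p ∈ Set.Icc (0:ℝ) 1, f p = max ((1 - p) * v) (gammaFn ul u p * (1 - v)) := by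
      intro p hp
      rw [gamma_eq ul u p hlt (by nlinarith [hp.1, hp.2])]
    have hfc : ContinuousOn f (Set.Icc 0 1) := by
      apply Continuous.continuousOn
      fun_prop
    obtain ⟨pb, hpb, hpbmin⟩ := (isCompact_Icc (a := (0:ℝ)) (b := 1)).exists_isMinOn
      (Set.nonempty_Icc.2 zero_le_one) hfc
    -- f pb ≤ sInf (T u v)
    have hfle : f pb ≤ sInf (T u v) := by
      apply le_csInf hTne
      rintro y ⟨p, hp, rfl⟩
      rw [← hfg p hp]
      exact hpbmin hp
    have hfRm : f pb ≤ RmVal ul vl := le_trans hfle hxle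
    have hpbA : pb ∈ A := by
      refine ⟨hpb, ?_⟩
      rw [hfg pb hpb] at hfRm
      exact le_trans (le_max_right _ _) hfRm
    have halpha : pb ≤ alphaM ul vl u v := le_csSup hAbdd hpbA
    have : v * (1 - alphaM ul vl u v) ≤ v * (1 - pb) := by nlinarith
    have h2 : (1 - pb) * v ≤ RmVal ul vl := by
      rw [hfg pb hpb] at hfRm
      exact le_trans (le_max_left _ _) hfRm
    nlinarith
end

section
/- Fix u̲ ∈ [0,1], v < 1, R^m ≥ 0, u ∈ [u̲,1]. Define γ(u,p) = min{q ∈ [0,1] : u̲ + q(u − u̲) ≥ pu}, α^m(u,v) = max{p ∈ [0,1] : γ(u,p)(1 − v) ≤ R^m} (assume this set is nonempty so the max exists), and Ū(u,v) = max{u̲ + π(u − u̲) : π ∈ [0,1], π(1 − v) ≤ R^m}. Then Ū(u,v) = α^m(u,v)·u. -/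
lemma gamma_le (ul u p q : ℝ) (hq : q ∈ Set.Icc (0:ℝ) 1)
    (h : p * u ≤ ul + q * (u - ul)) : gammaFn ul u p ≤ q :=
  csInf_le ⟨0, fun r hr => hr.1.1⟩ ⟨hq, h⟩

/-- Claim 5: for a singleton proposal, Ū(u,v) = α^m(u,v)·u, where
α^m(u,v) is the maximum of {p ∈ [0,1] : γ(u,p)(1 − v) ≤ R^m} (assumed to exist). -/
theorem stmt14 (ul Rm u v : ℝ) (hul : ul ∈ Set.Icc (0:ℝ) 1) (hu : u ∈ Set.Icc ul 1)
    (hv : v < 1) (hRm : 0 ≤ Rm) (am : ℝ)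
    (ham : IsGreatest {p : ℝ | p ∈ Set.Icc (0:ℝ) 1 ∧ gammaFn ul u p * (1 - v) ≤ Rm} am) :
    IsGreatest {x : ℝ | ∃ π ∈ Set.Icc (0:ℝ) 1, π * (1 - v) ≤ Rm ∧ x = ul + π * (u - ul)}
      (am * u) := by
  obtain ⟨⟨⟨ham0, ham1⟩, hamR⟩, hamUB⟩ := ham
  obtain ⟨hul0, hul1⟩ := hul
  obtain ⟨hu0, hu1⟩ := hu
  have hvpos : (0:ℝ) ≤ 1 - v := by linarith
  constructor
  · -- am * u is attained
    rcases eq_or_lt_of_le (le_trans hul0 hu0) with h0 | hupos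
    · -- u = 0, hence ul = 0
      have hu0' : u = 0 := h0.symm
      have hul0' : ul = 0 := le_antisymm (hu0'.symm ▸ hu0) hul0
      exact ⟨0, ⟨le_refl 0, zero_le_one⟩, by simpa using hRm, by
        rw [hu0', hul0']; ring⟩
    · -- u > 0
      have hulam : ul ≤ am * u := by
        have hmem : ul / u ≤ am := by
          apply hamUB
          refine ⟨⟨div_nonneg hul0 hupos.le, (div_le_one hupos).mpr hu0⟩, ?_⟩
        -- γ(ul/u) ≤ 0
          have hγ : gammaFn ul u (ul / u) ≤ 0 := by
            apply gamma_le _ _ _ 0 ⟨le_refl 0, zero_le_one⟩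
            rw [div_mul_cancel₀ _ hupos.ne']
            linarith
          calc gammaFn ul u (ul / u) * (1 - v) ≤ 0 * (1 - v) :=
                mul_le_mul_of_nonneg_right hγ hvpos
            _ ≤ Rm := by simpa using hRm
        calc ul = (ul / u) * u := by field_simp
          _ ≤ am * u := mul_le_mul_of_nonneg_right hmem hupos.le
      rcases eq_or_lt_of_le hu0 with heq | hlt
      · -- u = ul
        have : am * u = ul := le_antisymm (by nlinarith) hulam
        exact ⟨0, ⟨le_refl 0, zero_le_one⟩, by simpa using hRm, by
          rw [this]; ring⟩
      · -- ul < u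
        set π0 : ℝ := (am * u - ul) / (u - ul) with hπ0def
        have hsub : (0:ℝ) < u - ul := by linarith
        have hπ0nn : 0 ≤ π0 := div_nonneg (by linarith) hsub.le
        have hπ0le : π0 ≤ 1 := by
          rw [div_le_one hsub]; nlinarith
        have hx : ul + π0 * (u - ul) = am * u := by
          rw [hπ0def, div_mul_cancel₀ _ hsub.ne']; ring
        refine ⟨π0, ⟨hπ0nn, hπ0le⟩, ?_, hx.symm⟩
        have hle : π0 ≤ gammaFn ul u am := by
          refine le_csInf ⟨π0, ⟨⟨hπ0nn, hπ0le⟩, hx.ge⟩⟩ ?_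
          intro q hq
          rw [hπ0def, div_le_iff₀ hsub]
          nlinarith [hq.2]
        calc π0 * (1 - v) ≤ gammaFn ul u am * (1 - v) :=
              mul_le_mul_of_nonneg_right hle hvpos
          _ ≤ Rm := hamR
  · -- upper bound
    rintro x ⟨π, ⟨hπ0, hπ1⟩, hπR, rfl⟩
    rcases eq_or_lt_of_le (le_trans hul0 hu0) with h0 | hupos
    · have hu0' : u = 0 := h0.symm
      have hul0' : ul = 0 := le_antisymm (hu0'.symm ▸ hu0) hul0
      rw [hu0', hul0']; ring_nf; positivity
    · set p : ℝ := (ul + π * (u - ul)) / u with hpdef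
      have hxub : ul + π * (u - ul) ≤ u := by nlinarith
      have hxnn : 0 ≤ ul + π * (u - ul) := by nlinarith
      have hpmem : p ≤ am := by
        apply hamUB
        refine ⟨⟨div_nonneg hxnn hupos.le, (div_le_one hupos).mpr hxub⟩, ?_⟩
        have hγ : gammaFn ul u p ≤ π := by
          apply gamma_le _ _ _ π ⟨hπ0, hπ1⟩
          rw [hpdef, div_mul_cancel₀ _ hupos.ne']
        calc gammaFn ul u p * (1 - v) ≤ π * (1 - v) :=
              mul_le_mul_of_nonneg_right hγ hvpos
          _ ≤ Rm := hπR
      calc ul + π * (u - ul) = p * u := by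
            rw [hpdef, div_mul_cancel₀ _ hupos.ne']
        _ ≤ am * u := mul_le_mul_of_nonneg_right hpmem hupos.le
end
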